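/- There is a universal constant C > 0 such that the following holds. Let H be a real Hilbert space, X ⊆ H a compact connected set, x ∈ X and 0 < r < diam X / 2. Then β'_X(x,r) ≤ β_X(x,r) ≤ C·β'_X(x,r)^{1/2}. -/

import Mathlib

/-!
`β' ≤ β`: if `X ∩ B(x, r)` lies in the `S`-neighbourhood of a line `L`, test `β'` with the chord
of `L` through the ball when `S < r / 2`: all of `X ∩ B(x, r)` is within `S + (r - M)` of it, `M`
the half-chord, so `β' ≤ (S + r - M) / (2 M) ≤ S / r`. Otherwise a diameter gives `β' ≤ 1 / 2`.

`β ≤ 4 √β'`: a curve `s` of length `ℓ` lies in the ellipse with foci `s 0`, `s 1` and major axis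
`ℓ`, hence within `√(ℓ² - d²) / 2` of the line through them, `d = dist (s 0) (s 1)`. Since
`ℓ - d ≤ β' d`, this width is `O(d √β')`, while the points of `X` are within `β' d` of the curve.
-/

open Metric Set MeasureTheory

noncomputable section

/-- `ℓ^∞`, the Banach space of bounded real sequences with the sup norm. -/
abbrev lInf : Type := lp (fun _ : ℕ => ℝ) ⊤

/-- The set of values whose infimum defines `β'_X(x,r)`: for each rectifiable curve
`s : [0,1] → B(x,r)` with `s 0 ≠ s 1`, the quantity
`(ℓ(s) − |s(0)−s(1)| + sup_{z ∈ X ∩ B(x,r)} dist(z, s([0,1]))) / |s(0)−s(1)|`. -/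
def betaPrimeSet {E : Type*} [NormedAddCommGroup E] (X : Set E) (x : E) (r : ℝ) : Set ℝ :=
  { b | ∃ s : ℝ → E, ContinuousOn s (Set.Icc 0 1) ∧
      (∀ t ∈ Set.Icc (0:ℝ) 1, s t ∈ Metric.ball x r) ∧
      s 0 ≠ s 1 ∧ eVariationOn s (Set.Icc 0 1) ≠ ⊤ ∧
      b = ((eVariationOn s (Set.Icc 0 1)).toReal - dist (s 0) (s 1)
          + ⨆ z ∈ X ∩ Metric.ball x r, Metric.infDist z (s '' Set.Icc 0 1)) / dist (s 0) (s 1) }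

/-- `β'_X(x,r)`. -/
def betaPrime {E : Type*} [NormedAddCommGroup E] (X : Set E) (x : E) (r : ℝ) : ℝ :=
  sInf (betaPrimeSet X x r)

/-- The values whose infimum (after multiplying by `1/r`) defines Jones' β-number: for each
affine line `L = {p + t·v : t ∈ ℝ}` (with `v ≠ 0`), the quantity
`sup_{z ∈ X ∩ B(x,r)} dist(z, L) / r`. -/
def jonesBetaSet {H : Type*} [NormedAddCommGroup H] [NormedSpace ℝ H]
    (X : Set H) (x : H) (r : ℝ) : Set ℝ :=
  { b | ∃ p v : H, v ≠ 0 ∧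
      b = (⨆ z ∈ X ∩ Metric.ball x r, Metric.infDist z {y | ∃ t : ℝ, y = p + t • v}) / r }

/-- Jones' β-number `β_X(x,r)`. -/
def jonesBeta {H : Type*} [NormedAddCommGroup H] [NormedSpace ℝ H]
    (X : Set H) (x : H) (r : ℝ) : ℝ :=
  sInf (jonesBetaSet X x r)

open scoped RealInnerProductSpace

namespace Real

variable {α : Type*} {A : Set α} {f : α → ℝ}

lemma biSup_nonneg (h : ∀ z ∈ A, 0 ≤ f z) : 0 ≤ ⨆ z ∈ A, f z :=
  Real.iSup_nonneg fun z => Real.iSup_nonneg fun hz => h z hz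

lemma biSup_le {M : ℝ} (h : ∀ z ∈ A, f z ≤ M) (hM : 0 ≤ M) : ⨆ z ∈ A, f z ≤ M :=
  Real.iSup_le (fun z => Real.iSup_le (fun hz => h z hz) hM) hM

lemma le_biSup {M : ℝ} (h : ∀ z ∈ A, f z ≤ M) {z : α} (hz : z ∈ A) : f z ≤ ⨆ z ∈ A, f z :=
  le_ciSup₂ (f := fun z (_ : z ∈ A) => f z)
    ⟨M, by simp only [mem_upperBounds, mem_iUnion, mem_range]; grind⟩ z hz

end Real

/-- The radius exceeds the half-chord `M` at distance `d` from the centre by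
`r - M = d² / (r + M) ≤ S² / r`, and `r + S ≤ 2 M` as long as `S ≤ 3 r / 5`. -/
lemma add_sub_sqrt_div_le_div {d S r : ℝ} (hd : 0 ≤ d) (hdS : d ≤ S) (hSr : S < r / 2) :
    (S + r - √(r ^ 2 - d ^ 2)) / (2 * √(r ^ 2 - d ^ 2)) ≤ S / r := by
  have hr : 0 < r := by linarith
  have hpos : 0 < r ^ 2 - d ^ 2 := by nlinarith
  set M := √(r ^ 2 - d ^ 2)
  have hM2 : M ^ 2 = r ^ 2 - d ^ 2 := Real.sq_sqrt hpos.le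
  have hM : 0 < M := Real.sqrt_pos.2 hpos
  have hMr : M ≤ r := by nlinarith
  have hgap : r * (r - M) ≤ S ^ 2 := by nlinarith [mul_le_mul hdS hdS hd (hd.trans hdS)]
  have hlong : r + S ≤ 2 * M := by
    refine (pow_le_pow_iff_left₀ (by linarith) (by positivity) two_ne_zero).1 ?_
    nlinarith [mul_le_mul hdS hdS hd (hd.trans hdS)]
  rw [div_le_div_iff₀ (by positivity) hr]
  nlinarith [mul_le_mul_of_nonneg_left hlong (hd.trans hdS)]

lemma infDist_le_infDist_add_of_forall_le {α : Type*} [PseudoMetricSpace α] {K L : Set α}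
    (hK : K.Nonempty) {M : ℝ} (h : ∀ y ∈ K, infDist y L ≤ M) (z : α) :
    infDist z L ≤ infDist z K + M := by
  have : infDist z L - M ≤ infDist z K := (le_infDist hK).2 fun y hy => by
    linarith [infDist_le_infDist_add_dist (x := z) (y := y) (s := L), h y hy]
  linarith

lemma infDist_le_biSup_inter_ball {E : Type*} [PseudoMetricSpace E] {X K : Set E} {x z : E}
    {r : ℝ} (hz : z ∈ X ∩ ball x r) :
    infDist z K ≤ ⨆ w ∈ X ∩ ball x r, infDist w K :=
  Real.le_biSup (f := fun w => infDist w K) (M := infDist x K + r) (fun w hw => by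
    linarith [infDist_le_infDist_add_dist (x := w) (y := x) (s := K), mem_ball.1 hw.2]) hz

lemma edist_add_edist_le_eVariationOn {α E : Type*} [LinearOrder α] [PseudoEMetricSpace E]
    (f : α → E) {a b c : α} (hab : a ≤ b) (hbc : b ≤ c) :
    edist (f a) (f b) + edist (f b) (f c) ≤ eVariationOn f (Icc a c) := by
  have hsplit := eVariationOn.Icc_add_Icc f hab hbc (mem_univ b)
  simp only [univ_inter] at hsplit
  rw [← hsplit]
  exact add_le_add (eVariationOn.edist_le f ⟨le_rfl, hab⟩ ⟨hab, le_rfl⟩)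
    (eVariationOn.edist_le f ⟨le_rfl, hbc⟩ ⟨hbc, le_rfl⟩)

lemma dist_le_toReal_eVariationOn {α E : Type*} [LinearOrder α] [PseudoMetricSpace E] (f : α → E)
    {s : Set α} (hfin : eVariationOn f s ≠ ⊤) {a b : α} (ha : a ∈ s) (hb : b ∈ s) :
    dist (f a) (f b) ≤ (eVariationOn f s).toReal := by
  rw [dist_edist]
  exact ENNReal.toReal_mono hfin (eVariationOn.edist_le f ha hb)

lemma setOf_add_smul_eq {E : Type*} [AddCommGroup E] [Module ℝ E] {p q v : E} {c : ℝ}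
    (hc : c ≠ 0) (hq : ∃ σ : ℝ, q = p + σ • v) :
    {y : E | ∃ t : ℝ, y = q + t • c • v} = {y | ∃ t : ℝ, y = p + t • v} := by
  obtain ⟨σ, rfl⟩ := hq
  ext y
  constructor
  · rintro ⟨t, rfl⟩
    exact ⟨σ + t * c, by module⟩
  · rintro ⟨t, rfl⟩
    refine ⟨(t - σ) * c⁻¹, ?_⟩
    rw [smul_smul, mul_assoc, inv_mul_cancel₀ hc, mul_one]
    module

lemma betaPrimeSet_nonneg {E : Type*} [NormedAddCommGroup E] {X : Set E} {x : E} {r b : ℝ}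
    (hb : b ∈ betaPrimeSet X x r) : 0 ≤ b := by
  obtain ⟨s, -, -, hne, hfin, rfl⟩ := hb
  have hdℓ := dist_le_toReal_eVariationOn s hfin (left_mem_Icc.2 zero_le_one)
    (right_mem_Icc.2 (zero_le_one' ℝ))
  have hT := Real.biSup_nonneg (A := X ∩ ball x r)
    (f := fun z => infDist z (s '' Icc 0 1)) fun z _ => infDist_nonneg
  exact div_nonneg (by linarith) dist_nonneg

section Normed

variable {E : Type*} [NormedAddCommGroup E] [NormedSpace ℝ E]

lemma eVariationOn_lineMap (a b : E) :
    eVariationOn (AffineMap.lineMap a b : ℝ → E) (Icc 0 1) = edist a b := by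
  refine le_antisymm ?_ ?_
  · calc eVariationOn (AffineMap.lineMap a b ∘ id : ℝ → E) (Icc 0 1)
        ≤ nndist a b * eVariationOn id (Icc (0 : ℝ) 1) :=
          (lipschitzWith_lineMap a b).lipschitzOnWith.comp_eVariationOn_le (mapsTo_univ _ _)
      _ = edist a b := by
          simp only [eVariationOn_id_Icc, sub_zero, ENNReal.ofReal_one, mul_one, edist_nndist]
  · simpa using eVariationOn.edist_le (AffineMap.lineMap a b : ℝ → E)
      (left_mem_Icc.2 zero_le_one) (right_mem_Icc.2 zero_le_one)

lemma segment_mem_betaPrimeSet (X : Set E) {x a b : E} {r : ℝ} (ha : a ∈ ball x r)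
    (hb : b ∈ ball x r) (hab : a ≠ b) :
    (⨆ z ∈ X ∩ ball x r, infDist z (segment ℝ a b)) / dist a b ∈ betaPrimeSet X x r := by
  have hvar := eVariationOn_lineMap a b
  refine ⟨AffineMap.lineMap a b, AffineMap.lineMap_continuous.continuousOn,
    fun t ht => (convex_ball x r).segment_subset ha hb ?_, by simpa using hab,
    by simp [hvar], ?_⟩
  · rw [segment_eq_image_lineMap]
    exact mem_image_of_mem _ ht
  · simp [hvar, segment_eq_image_lineMap, edist_dist]

lemma betaPrime_le_of_segment {X : Set E} {x a b : E} {r M : ℝ} (ha : a ∈ ball x r)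
    (hb : b ∈ ball x r) (hab : a ≠ b) (hM : ∀ z ∈ X ∩ ball x r, infDist z (segment ℝ a b) ≤ M)
    (hM0 : 0 ≤ M) : betaPrime X x r ≤ M / dist a b :=
  (csInf_le ⟨0, fun _ => betaPrimeSet_nonneg⟩ (segment_mem_betaPrimeSet X ha hb hab)).trans
    (div_le_div_of_nonneg_right (Real.biSup_le hM hM0) dist_nonneg)

lemma betaPrimeSet_nonempty (X : Set E) {x v : E} {r : ℝ} (hr : 0 < r) (hv : v ≠ 0) :
    (betaPrimeSet X x r).Nonempty := by
  have hw : dist (x + (r / (2 * ‖v‖)) • v) x = r / 2 := by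
    rw [dist_self_add_left, norm_smul, Real.norm_eq_abs,
      abs_of_pos (div_pos hr (mul_pos two_pos (norm_pos_iff.2 hv)))]
    field_simp
  refine ⟨_, segment_mem_betaPrimeSet X (mem_ball_self hr) (by rw [mem_ball, hw]; linarith)
    fun h => ?_⟩
  rw [← h, dist_self] at hw
  linarith

lemma jonesBetaSet_nonneg {X : Set E} {x : E} {r B : ℝ} (hr : 0 ≤ r)
    (hB : B ∈ jonesBetaSet X x r) : 0 ≤ B := by
  obtain ⟨p, v, -, rfl⟩ := hB
  exact div_nonneg (Real.biSup_nonneg fun z _ => infDist_nonneg) hr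

lemma jonesBeta_nonneg (X : Set E) (x : E) {r : ℝ} (hr : 0 ≤ r) : 0 ≤ jonesBeta X x r :=
  Real.sInf_nonneg fun _ => jonesBetaSet_nonneg hr

lemma jonesBeta_le_of_forall_infDist_le {X : Set E} {x p v : E} {r M : ℝ} (hr : 0 ≤ r)
    (hv : v ≠ 0) (hM : ∀ z ∈ X ∩ ball x r, infDist z {y | ∃ t : ℝ, y = p + t • v} ≤ M)
    (hM0 : 0 ≤ M) : jonesBeta X x r ≤ M / r :=
  (csInf_le ⟨0, fun _ => jonesBetaSet_nonneg hr⟩ ⟨p, v, hv, rfl⟩).trans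
    (div_le_div_of_nonneg_right (Real.biSup_le hM hM0) hr)

lemma jonesBeta_le_one (X : Set E) (x : E) {v : E} {r : ℝ} (hr : 0 < r) (hv : v ≠ 0) :
    jonesBeta X x r ≤ 1 := by
  have hxL : x ∈ {y | ∃ t : ℝ, y = x + t • v} := ⟨0, by simp⟩
  calc jonesBeta X x r ≤ r / r := jonesBeta_le_of_forall_infDist_le hr.le hv
        (fun z hz => (infDist_le_dist_of_mem hxL).trans (mem_ball.1 hz.2).le) hr.le
    _ = 1 := div_self hr.ne'

end Normed

section Hilbert

variable {H : Type*} [NormedAddCommGroup H] [InnerProductSpace ℝ H]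

lemma norm_sub_add_smul_sq {u : H} (hu : ‖u‖ = 1) (p z : H) (t : ℝ) :
    ‖z - (p + t • u)‖ ^ 2 = ‖z - p - ⟪z - p, u⟫ • u‖ ^ 2 + (⟪z - p, u⟫ - t) ^ 2 := by
  have hperp : ⟪z - p - ⟪z - p, u⟫ • u, u⟫ = 0 := by
    rw [inner_sub_left, real_inner_smul_left, real_inner_self_eq_norm_sq, hu]
    ring
  rw [show z - (p + t • u) = (z - p - ⟪z - p, u⟫ • u) + (⟪z - p, u⟫ - t) • u by module,
    norm_add_sq_real, real_inner_smul_right, hperp, norm_smul, hu, Real.norm_eq_abs]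
  simp only [mul_zero, mul_one, add_zero, sq_abs]

lemma infDist_line_eq {u : H} (hu : ‖u‖ = 1) (p z : H) :
    infDist z {y | ∃ t : ℝ, y = p + t • u} = ‖z - p - ⟪z - p, u⟫ • u‖ := by
  have hfoot : p + ⟪z - p, u⟫ • u ∈ {y | ∃ t : ℝ, y = p + t • u} := ⟨_, rfl⟩
  refine le_antisymm ((infDist_le_dist_of_mem hfoot).trans_eq ?_) ((le_infDist ⟨_, hfoot⟩).2 ?_)
  · rw [dist_eq_norm, sub_add_eq_sub_sub]
  · rintro _ ⟨t, rfl⟩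
    rw [dist_eq_norm, ← pow_le_pow_iff_left₀ (norm_nonneg _) (norm_nonneg _) two_ne_zero,
      norm_sub_add_smul_sq hu]
    nlinarith

lemma four_mul_infDist_line_sq_le {a b : H} (hab : a ≠ b) (z : H) :
    4 * infDist z {y | ∃ t : ℝ, y = a + t • (b - a)} ^ 2
      ≤ (dist a z + dist z b) ^ 2 - dist a b ^ 2 := by
  have hD : ‖b - a‖ ≠ 0 := norm_ne_zero_iff.2 (sub_ne_zero.2 hab.symm)
  set u := ‖b - a‖⁻¹ • (b - a)
  have hu : ‖u‖ = 1 := by rw [norm_smul, norm_inv, norm_norm, inv_mul_cancel₀ hD]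
  rw [← setOf_add_smul_eq (q := a) (inv_ne_zero hD) ⟨0, by simp⟩, infDist_line_eq hu]
  have hb : b = a + ‖b - a‖ • u := by
    rw [smul_smul, mul_inv_cancel₀ hD, one_smul, add_sub_cancel]
  have hA := norm_sub_add_smul_sq hu a z 0
  have hB := norm_sub_add_smul_sq hu a z ‖b - a‖
  rw [← hb] at hB
  simp only [zero_smul, add_zero, sub_zero] at hA
  rw [dist_comm a z, dist_eq_norm, dist_eq_norm, dist_comm, dist_eq_norm]
  set A := ‖z - a‖
  set B := ‖z - b‖
  set D := ‖b - a‖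
  set h := ‖z - a - ⟪z - a, u⟫ • u‖
  set α := ⟪z - a, u⟫
  -- Cauchy–Schwarz for the vectors `(h, α)` and `(h, D - α)`, of norms `A` and `B`
  have hAB : h ^ 2 + α * (D - α) ≤ A * B := by
    have hsq : (h ^ 2 + α * (D - α)) ^ 2 ≤ (A * B) ^ 2 := by
      rw [mul_pow, hA, hB]
      nlinarith [sq_nonneg (h * (α - (D - α)))]
    exact (abs_le_of_sq_le_sq hsq (by positivity)).trans' (le_abs_self _)
  nlinarith

/-- The foot `q + α • u` of `z` is moved to the segment by shrinking towards `q` by `m / r`,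
which costs at most `|α| (1 - m / r) ≤ r - m`. -/
lemma infDist_segment_le {u : H} (hu : ‖u‖ = 1) (q z : H) {m r : ℝ} (hr : 0 < r) (hmr : m ≤ r)
    (hz : |⟪z - q, u⟫| ≤ r) :
    infDist z (segment ℝ (q - m • u) (q + m • u))
      ≤ infDist z {y | ∃ t : ℝ, y = q + t • u} + (r - m) := by
  set α := ⟪z - q, u⟫
  have hαr := abs_le.1 (show |α / r| ≤ 1 by rwa [abs_div, abs_of_pos hr, div_le_one hr])
  have hseg : q + (m / r * α) • u ∈ segment ℝ (q - m • u) (q + m • u) :=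
    ⟨(1 - α / r) / 2, (1 + α / r) / 2, by linarith, by linarith, by ring, by module⟩
  have hshrink : 0 ≤ 1 - m / r := sub_nonneg.2 ((div_le_one hr).2 hmr)
  have hshift : dist (q + α • u) (q + (m / r * α) • u) ≤ r - m := by
    rw [dist_add_left, dist_eq_norm, ← sub_smul, norm_smul, hu, mul_one, Real.norm_eq_abs,
      show α - m / r * α = (1 - m / r) * α by ring, abs_mul, abs_of_nonneg hshrink]
    calc (1 - m / r) * |α| ≤ (1 - m / r) * r := by gcongr
      _ = r - m := by field_simp
  calc infDist z (segment ℝ (q - m • u) (q + m • u))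
      ≤ dist z (q + (m / r * α) • u) := infDist_le_dist_of_mem hseg
    _ ≤ dist z (q + α • u) + dist (q + α • u) (q + (m / r * α) • u) := dist_triangle _ _ _
    _ ≤ infDist z {y | ∃ t : ℝ, y = q + t • u} + (r - m) := by
      rw [infDist_line_eq hu, dist_eq_norm, sub_add_eq_sub_sub]
      exact add_le_add le_rfl hshift

lemma betaPrime_le_of_chord {X : Set H} {x q u : H} {r M S m : ℝ} (hr : 0 < r) (hu : ‖u‖ = 1)
    (hxq : ⟪x - q, u⟫ = 0) (hMr : ‖x - q‖ ^ 2 + M ^ 2 = r ^ 2)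
    (hS : ∀ z ∈ X ∩ ball x r, infDist z {y | ∃ t : ℝ, y = q + t • u} ≤ S) (hS0 : 0 ≤ S)
    (hm : 0 < m) (hmM : m < M) :
    betaPrime X x r ≤ (S + r - m) / (2 * m) := by
  have hball : ∀ σ : ℝ, |σ| < M → q + σ • u ∈ ball x r := by
    intro σ hσ
    rw [mem_ball, dist_eq_norm, ← pow_lt_pow_iff_left₀ (norm_nonneg _) hr.le two_ne_zero,
      show q + σ • u - x = σ • u - (x - q) by abel, norm_sub_sq_real, real_inner_smul_left,
      real_inner_comm, hxq, norm_smul, hu, Real.norm_eq_abs]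
    nlinarith [sq_abs σ, abs_nonneg σ]
  have hproj : ∀ z ∈ X ∩ ball x r, |⟪z - q, u⟫| ≤ r := by
    intro z hz
    rw [← sub_add_sub_cancel z x q, inner_add_left, hxq, add_zero]
    refine (abs_real_inner_le_norm _ _).trans ?_
    rw [hu, mul_one, ← dist_eq_norm]
    exact (mem_ball.1 hz.2).le
  have hleft : q - m • u ∈ ball x r := by
    simpa [neg_smul, ← sub_eq_add_neg] using hball (-m) (by rwa [abs_neg, abs_of_pos hm])
  have hright : q + m • u ∈ ball x r := hball m (by rwa [abs_of_pos hm])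
  have hdist : dist (q - m • u) (q + m • u) = 2 * m := by
    rw [dist_eq_norm, show q - m • u - (q + m • u) = (-(2 * m)) • u by module, norm_smul, hu,
      mul_one, Real.norm_eq_abs, abs_neg, abs_of_pos (by positivity)]
  have hne : q - m • u ≠ q + m • u := fun h => by
    rw [h, dist_self] at hdist
    linarith
  have hmr : m ≤ r := by nlinarith [norm_nonneg (x - q)]
  rw [← hdist]
  refine betaPrime_le_of_segment hleft hright hne (fun z hz => ?_) (by linarith)
  linarith [infDist_segment_le hu q z hr hmr (hproj z hz), hS z hz]

/-- The curves in `β'` must stay in the open ball, so the full chord `m = M` of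
`betaPrime_le_of_chord` is only reached in the limit. -/
lemma betaPrime_le_of_forall_infDist_line_le {X : Set H} {x q u : H} {r M S : ℝ} (hr : 0 < r)
    (hu : ‖u‖ = 1) (hxq : ⟪x - q, u⟫ = 0) (hM : 0 < M) (hMr : ‖x - q‖ ^ 2 + M ^ 2 = r ^ 2)
    (hS0 : 0 ≤ S) (hS : ∀ z ∈ X ∩ ball x r, infDist z {y | ∃ t : ℝ, y = q + t • u} ≤ S) :
    betaPrime X x r ≤ (S + r - M) / (2 * M) := by
  have hchord : ∀ θ ∈ Ioo (0 : ℝ) 1, betaPrime X x r ≤ (S + r - θ * M) / (2 * (θ * M)) :=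
    fun θ hθ => betaPrime_le_of_chord hr hu hxq hMr hS hS0 (mul_pos hθ.1 hM)
      (mul_lt_of_lt_one_left hM hθ.2)
  have hcont : ContinuousAt (fun θ : ℝ => (S + r - θ * M) / (2 * (θ * M))) 1 :=
    ContinuousAt.div (by fun_prop) (by fun_prop) (by positivity)
  simpa using ge_of_tendsto (hcont.tendsto.mono_left nhdsWithin_le_nhds)
    (Filter.eventually_of_mem (Ioo_mem_nhdsLT zero_lt_one) hchord)

lemma betaPrime_le_of_mem_jonesBetaSet {X : Set H} {x : H} (hx : x ∈ X) {r B : ℝ} (hr : 0 < r)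
    (hB : B ∈ jonesBetaSet X x r) : betaPrime X x r ≤ B := by
  obtain ⟨p, v, hv, rfl⟩ := hB
  have hv' : ‖v‖ ≠ 0 := norm_ne_zero_iff.2 hv
  set u := ‖v‖⁻¹ • v
  have hu : ‖u‖ = 1 := by rw [norm_smul, norm_inv, norm_norm, inv_mul_cancel₀ hv']
  set q := p + ⟪x - p, u⟫ • u
  have hL : {y | ∃ t : ℝ, y = p + t • v} = {y | ∃ t : ℝ, y = q + t • u} :=
    (setOf_add_smul_eq (inv_ne_zero hv') ⟨⟪x - p, u⟫ * ‖v‖⁻¹, by rw [mul_smul]⟩).symm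
  rw [hL]
  set S := ⨆ z ∈ X ∩ ball x r, infDist z {y | ∃ t : ℝ, y = q + t • u}
  have hS : ∀ z ∈ X ∩ ball x r, infDist z {y | ∃ t : ℝ, y = q + t • u} ≤ S :=
    fun z hz => infDist_le_biSup_inter_ball hz
  have hxq : ⟪x - q, u⟫ = 0 := by
    rw [show x - q = x - p - ⟪x - p, u⟫ • u from sub_add_eq_sub_sub _ _ _, inner_sub_left,
      real_inner_smul_left, real_inner_self_eq_norm_sq, hu]
    ring
  have hdS : ‖x - q‖ ≤ S := by
    simpa [infDist_line_eq hu, hxq] using hS x ⟨hx, mem_ball_self hr⟩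
  rcases lt_or_ge S (r / 2) with hsmall | hlarge
  · -- the chord of the line itself
    have hpos : 0 < r ^ 2 - ‖x - q‖ ^ 2 := by nlinarith [norm_nonneg (x - q)]
    exact (betaPrime_le_of_forall_infDist_line_le hr hu hxq (Real.sqrt_pos.2 hpos)
      (by rw [Real.sq_sqrt hpos.le]; ring) ((norm_nonneg _).trans hdS) hS).trans
      (add_sub_sqrt_div_le_div (norm_nonneg _) hdS hsmall)
  · -- a diameter of the ball in the direction `u`
    have hxL : x ∈ {y | ∃ t : ℝ, y = x + t • u} := ⟨0, by simp⟩
    have hdiam := betaPrime_le_of_forall_infDist_line_le (X := X) hr hu (q := x) (M := r)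
      (by simp) hr (by simp) hr.le fun z hz =>
        (infDist_le_dist_of_mem hxL).trans (mem_ball.1 hz.2).le
    refine hdiam.trans ?_
    rw [div_le_div_iff₀ (by positivity) hr]
    nlinarith

lemma infDist_chord_le {s : ℝ → H} (hne : s 0 ≠ s 1) (hfin : eVariationOn s (Icc 0 1) ≠ ⊤)
    {t : ℝ} (ht : t ∈ Icc (0 : ℝ) 1) :
    infDist (s t) {y | ∃ τ : ℝ, y = s 0 + τ • (s 1 - s 0)}
      ≤ √((eVariationOn s (Icc 0 1)).toReal ^ 2 - dist (s 0) (s 1) ^ 2) / 2 := by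
  have hsum : dist (s 0) (s t) + dist (s t) (s 1) ≤ (eVariationOn s (Icc 0 1)).toReal := by
    rw [dist_edist, dist_edist, ← ENNReal.toReal_add (edist_ne_top _ _) (edist_ne_top _ _)]
    exact ENNReal.toReal_mono hfin (edist_add_edist_le_eVariationOn s ht.1 ht.2)
  rw [le_div_iff₀ two_pos]
  refine Real.le_sqrt_of_sq_le ?_
  nlinarith [four_mul_infDist_line_sq_le hne (s t),
    add_nonneg (dist_nonneg (x := s 0) (y := s t)) (dist_nonneg (x := s t) (y := s 1))]

lemma jonesBeta_le_of_mem_betaPrimeSet {X : Set H} {x : H} {r b : ℝ} (hr : 0 < r)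
    (hb : b ∈ betaPrimeSet X x r) : jonesBeta X x r ≤ 4 * √b := by
  have hb0 := betaPrimeSet_nonneg hb
  obtain ⟨s, -, hball, hne, hfin, hb⟩ := hb
  have hv : s 1 - s 0 ≠ 0 := sub_ne_zero.2 hne.symm
  rcases le_or_gt 1 b with hb1 | hb1
  · linarith [jonesBeta_le_one X x hr hv, Real.one_le_sqrt.2 hb1]
  have h01 : (0 : ℝ) ∈ Icc (0 : ℝ) 1 := left_mem_Icc.2 zero_le_one
  have h11 : (1 : ℝ) ∈ Icc (0 : ℝ) 1 := right_mem_Icc.2 zero_le_one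
  set d := dist (s 0) (s 1)
  set ℓ := (eVariationOn s (Icc 0 1)).toReal
  set T := ⨆ z ∈ X ∩ ball x r, infDist z (s '' Icc 0 1)
  set M := √(ℓ ^ 2 - d ^ 2) / 2
  have hd : 0 < d := dist_pos.2 hne
  have hdr : d ≤ 2 * r := by
    linarith [dist_triangle_right (s 0) (s 1) x, mem_ball.1 (hball 0 h01), mem_ball.1 (hball 1 h11)]
  have hdℓ : d ≤ ℓ := dist_le_toReal_eVariationOn s hfin h01 h11
  have hT0 : 0 ≤ T := Real.biSup_nonneg fun z _ => infDist_nonneg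
  have hbd : b * d = ℓ - d + T := by rw [hb]; field_simp
  have hL : ∀ z ∈ X ∩ ball x r, infDist z {y | ∃ τ : ℝ, y = s 0 + τ • (s 1 - s 0)} ≤ T + M :=
    fun z hz => (infDist_le_infDist_add_of_forall_le ⟨_, mem_image_of_mem s h01⟩
      (by rintro _ ⟨t, ht, rfl⟩; exact infDist_chord_le hne hfin ht) z).trans
      (add_le_add (infDist_le_biSup_inter_ball hz) le_rfl)
  refine (jonesBeta_le_of_forall_infDist_le hr.le hv hL (by positivity)).trans ?_
  have hsqrt : b ≤ √b := Real.le_sqrt_self_iff.2 hb1.le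
  have hM : M ≤ 2 * r * √b := by
    have hprod : (ℓ - d) * (ℓ + d) ≤ b * d * (3 * d) :=
      mul_le_mul (by linarith) (by nlinarith) (by linarith) (by positivity)
    rw [div_le_iff₀ two_pos, Real.sqrt_le_left (by positivity), mul_pow, mul_pow,
      Real.sq_sqrt hb0]
    nlinarith [mul_le_mul hdr hdr hd.le (by positivity)]
  rw [div_le_iff₀ hr]
  nlinarith

end Hilbert

/-- **Proposition.** In a real Hilbert space, `β'_X(x,r) ≤ β_X(x,r) ≤ C·β'_X(x,r)^{1/2}` for a
universal constant `C > 0`, whenever `X` is compact connected, `x ∈ X`, `0 < r < diam X / 2`. -/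
theorem betaPrime_le_jonesBeta_le_sqrt_betaPrime :
    ∃ C : ℝ, 0 < C ∧
      ∀ (H : Type*) [NormedAddCommGroup H] [InnerProductSpace ℝ H] [CompleteSpace H],
        ∀ X : Set H, IsCompact X → IsConnected X →
          ∀ x ∈ X, ∀ r : ℝ, 0 < r → r < Metric.diam X / 2 →
            betaPrime X x r ≤ jonesBeta X x r ∧
            jonesBeta X x r ≤ C * Real.sqrt (betaPrime X x r) := by
  refine ⟨4, four_pos, fun H _ _ _ X _ _ x hx r hr hrX => ?_⟩
  obtain ⟨y₁, -, y₂, -, hy⟩ : X.Nontrivial :=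
    not_subsingleton_iff.1 fun h => by linarith [diam_subsingleton h]
  have hv : y₁ - y₂ ≠ 0 := sub_ne_zero.2 hy
  refine ⟨le_csInf ⟨_, x, _, hv, rfl⟩ fun B hB => betaPrime_le_of_mem_jonesBetaSet hx hr hB, ?_⟩
  have hβ0 := jonesBeta_nonneg X x hr.le
  rw [← div_le_iff₀' four_pos]
  refine Real.le_sqrt_of_sq_le (le_csInf (betaPrimeSet_nonempty X hr hv) fun b hb => ?_)
  exact (Real.le_sqrt (by positivity) (betaPrimeSet_nonneg hb)).1
    ((div_le_iff₀' four_pos).2 (jonesBeta_le_of_mem_betaPrimeSet hr hb))
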